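/- Let K = ℚ(α) be an imaginary quadratic field with 𝒪_K = ℤ[α], and let c, a be positive integers with c ∣ a. Then the map sending an invertible fractional ideal Λ of ℤ[aα] to ℤ[cα]·Λ induces a well-defined group homomorphism φ_{c,a} : Cl(ℤ[aα]) → Cl(ℤ[cα]) on ideal class groups. Moreover, for d ∣ c ∣ a one has φ_{d,c} ∘ φ_{c,a} = φ_{d,a}, and φ_{a,a} is the identity. -/

import Mathlib

noncomputable section

open Pointwise

/-- An imaginary quadratic number field embedded in ℂ. -/
def IsImagQuad (K : Subfield ℂ) : Prop :=
  Module.finrank ℚ K = 2 ∧ ∃ z : K, (z : ℂ).im ≠ 0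

/-- The lattice product: the additive subgroup generated by all products `a * b`. -/
def latticeProduct (A B : AddSubgroup ℂ) : AddSubgroup ℂ :=
  AddSubgroup.closure {z : ℂ | ∃ a ∈ A, ∃ b ∈ B, z = a * b}

/-- A fractional ideal of the order `O` in `K`. -/
def IsFracIdeal (K : Subfield ℂ) (O : Subring ℂ) (Λ : AddSubgroup ℂ) : Prop :=
  (Λ : Set ℂ) ⊆ K ∧ Λ ≠ ⊥ ∧ Λ.FG ∧ ∀ a ∈ O, ∀ x ∈ Λ, a * x ∈ Λ

/-- An invertible (proper) fractional ideal of `O`. -/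
def IsInvFracIdeal (K : Subfield ℂ) (O : Subring ℂ) (Λ : AddSubgroup ℂ) : Prop :=
  IsFracIdeal K O Λ ∧ ∃ M : AddSubgroup ℂ, IsFracIdeal K O M ∧
    latticeProduct Λ M = O.toAddSubgroup

/-- Homothety of additive subgroups of ℂ (giving equality of ideal classes). -/
def Homothetic (A B : AddSubgroup ℂ) : Prop :=
  ∃ γ : ℂ, γ ≠ 0 ∧ (B : Set ℂ) = γ • (A : Set ℂ)

/-- The order `ℤ[aα]` in `K`, as a subring of ℂ. -/
def zOrder (α : ℂ) (a : ℕ) : Subring ℂ := Subring.closure {(a : ℂ) * α}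

lemma mul_mem_latticeProduct {A B : AddSubgroup ℂ} {x y : ℂ} (hx : x ∈ A) (hy : y ∈ B) :
    x * y ∈ latticeProduct A B :=
  AddSubgroup.subset_closure ⟨x, hx, y, hy, rfl⟩

lemma toIntSubmodule_latticeProduct (A B : AddSubgroup ℂ) :
    AddSubgroup.toIntSubmodule (latticeProduct A B) =
      AddSubgroup.toIntSubmodule A * AddSubgroup.toIntSubmodule B := by
  apply le_antisymm
  · intro x hx
    have hx' : x ∈ latticeProduct A B := hx
    refine AddSubgroup.closure_induction ?_ ?_ ?_ ?_ hx'
    · rintro z ⟨p, hp, q, hq, rfl⟩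
      exact Submodule.mul_mem_mul hp hq
    · exact Submodule.zero_mem _
    · intro p q _ _ hp hq; exact Submodule.add_mem _ hp hq
    · intro p _ hp; exact Submodule.neg_mem _ hp
  · exact Submodule.mul_le.2 fun m hm n hn => mul_mem_latticeProduct hm hn

lemma toIntSubmodule_inj {A B : AddSubgroup ℂ}
    (h : AddSubgroup.toIntSubmodule A = AddSubgroup.toIntSubmodule B) : A = B := by
  have := congrArg (Submodule.toAddSubgroup) h
  rwa [AddSubgroup.toIntSubmodule_toAddSubgroup, AddSubgroup.toIntSubmodule_toAddSubgroup] at this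

lemma latticeProduct_comm (A B : AddSubgroup ℂ) : latticeProduct A B = latticeProduct B A := by
  apply toIntSubmodule_inj
  rw [toIntSubmodule_latticeProduct, toIntSubmodule_latticeProduct, Submodule.mul_comm]

lemma latticeProduct_assoc (A B C : AddSubgroup ℂ) :
    latticeProduct (latticeProduct A B) C = latticeProduct A (latticeProduct B C) := by
  apply toIntSubmodule_inj
  rw [toIntSubmodule_latticeProduct, toIntSubmodule_latticeProduct,
    toIntSubmodule_latticeProduct, toIntSubmodule_latticeProduct, mul_assoc]

lemma latticeProduct_absorb (O : Subring ℂ) (B : AddSubgroup ℂ)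
    (h : ∀ r ∈ O, ∀ x ∈ B, r * x ∈ B) : latticeProduct O.toAddSubgroup B = B := by
  apply le_antisymm
  · refine AddSubgroup.closure_le _ |>.2 ?_
    rintro z ⟨p, hp, q, hq, rfl⟩
    exact h p hp q hq
  · intro x hx
    exact (one_mul x) ▸ mul_mem_latticeProduct (O.one_mem) hx

lemma le_latticeProduct_right (O : Subring ℂ) (B : AddSubgroup ℂ) :
    B ≤ latticeProduct O.toAddSubgroup B := fun x hx =>
  (one_mul x) ▸ mul_mem_latticeProduct (O.one_mem) hx

lemma addSubgroup_fg_iff (A : AddSubgroup ℂ) : A.FG ↔ (AddSubgroup.toIntSubmodule A).FG := by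
  rw [Submodule.fg_iff_addSubgroup_fg, AddSubgroup.toIntSubmodule_toAddSubgroup]

lemma latticeProduct_fg {A B : AddSubgroup ℂ} (hA : A.FG) (hB : B.FG) :
    (latticeProduct A B).FG := by
  rw [addSubgroup_fg_iff] at hA hB ⊢
  rw [toIntSubmodule_latticeProduct]
  exact hA.mul hB

lemma latticeProduct_map (γ : ℂ) (A B : AddSubgroup ℂ) :
    latticeProduct A (B.map (AddMonoidHom.mulLeft γ)) =
      (latticeProduct A B).map (AddMonoidHom.mulLeft γ) := by
  unfold latticeProduct
  rw [AddMonoidHom.map_closure]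
  congr 1
  ext z
  simp only [Set.mem_image, Set.mem_setOf_eq, AddSubgroup.mem_map, AddMonoidHom.coe_mulLeft]
  constructor
  · rintro ⟨p, hp, q, ⟨b, hb, rfl⟩, rfl⟩
    exact ⟨p * b, ⟨p, hp, b, hb, rfl⟩, by ring⟩
  · rintro ⟨w, ⟨p, hp, b, hb, rfl⟩, rfl⟩
    exact ⟨p, hp, γ * b, ⟨b, hb, rfl⟩, by ring⟩

/-- Let `K = ℚ(α)` be an imaginary quadratic field with `𝒪_K = ℤ[α]`, and
`c ∣ a` positive integers.  The map `Λ ↦ ℤ[cα]·Λ` on invertible fractional ideals of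
`ℤ[aα]` lands in invertible fractional ideals of `ℤ[cα]`, respects homothety (so it is
well defined on ideal classes), is multiplicative (a group homomorphism
`φ_{c,a} : Cl(ℤ[aα]) → Cl(ℤ[cα])`); moreover for `d ∣ c ∣ a` one has
`φ_{d,c} ∘ φ_{c,a} = φ_{d,a}`, and `φ_{a,a}` is the identity. -/
theorem statement13
    (K : Subfield ℂ) (hK : IsImagQuad K) (α : ℂ) (hαK : α ∈ K)
    (hringint : ∀ z : ℂ, (z ∈ K ∧ IsIntegral ℤ z) ↔ z ∈ Subring.closure ({α} : Set ℂ))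
    (hKgen : K = Subfield.closure ({α} : Set ℂ))
    (a c d : ℕ) (ha : 0 < a) (hc : 0 < c) (hd : 0 < d)
    (hca : c ∣ a) (hdc : d ∣ c) :
    (∀ Λ : AddSubgroup ℂ, IsInvFracIdeal K (zOrder α a) Λ →
      IsInvFracIdeal K (zOrder α c) (latticeProduct (zOrder α c).toAddSubgroup Λ)) ∧
    (∀ Λ₁ Λ₂ : AddSubgroup ℂ, IsInvFracIdeal K (zOrder α a) Λ₁ →
      IsInvFracIdeal K (zOrder α a) Λ₂ → Homothetic Λ₁ Λ₂ →
      Homothetic (latticeProduct (zOrder α c).toAddSubgroup Λ₁)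
        (latticeProduct (zOrder α c).toAddSubgroup Λ₂)) ∧
    (∀ Λ₁ Λ₂ : AddSubgroup ℂ, IsInvFracIdeal K (zOrder α a) Λ₁ →
      IsInvFracIdeal K (zOrder α a) Λ₂ →
      Homothetic
        (latticeProduct (zOrder α c).toAddSubgroup (latticeProduct Λ₁ Λ₂))
        (latticeProduct (latticeProduct (zOrder α c).toAddSubgroup Λ₁)
          (latticeProduct (zOrder α c).toAddSubgroup Λ₂))) ∧
    (∀ Λ : AddSubgroup ℂ, IsInvFracIdeal K (zOrder α a) Λ →
      latticeProduct (zOrder α d).toAddSubgroup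
          (latticeProduct (zOrder α c).toAddSubgroup Λ) =
        latticeProduct (zOrder α d).toAddSubgroup Λ) ∧
    (∀ Λ : AddSubgroup ℂ, IsInvFracIdeal K (zOrder α a) Λ →
      latticeProduct (zOrder α a).toAddSubgroup Λ = Λ) := by
  -- α is an algebraic integer
  have hαint : IsIntegral ℤ α :=
    ((hringint α).2 (Subring.subset_closure rfl)).2
  -- zOrder monotonicity
  have hmono : ∀ m n : ℕ, m ∣ n → zOrder α n ≤ zOrder α m := by
    intro m n hmn
    obtain ⟨k, rfl⟩ := hmn
    refine Subring.closure_le.2 ?_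
    rintro z rfl
    have h1 : ((m : ℂ) * α) ∈ zOrder α m := Subring.subset_closure rfl
    have h2 : ((k : ℂ)) ∈ zOrder α m := natCast_mem _ k
    have : ((k : ℂ)) * ((m : ℂ) * α) ∈ zOrder α m := Subring.mul_mem _ h2 h1
    convert this using 1
    push_cast
    simp only [SetLike.mem_coe]; ring_nf
  -- zOrder subsets of K
  have hzK : ∀ m : ℕ, ((zOrder α m : Subring ℂ) : Set ℂ) ⊆ K := by
    intro m
    have : zOrder α m ≤ K.toSubring := by
      refine Subring.closure_le.2 ?_
      rintro z rfl
      exact K.toSubring.mul_mem (natCast_mem K.toSubring m) hαK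
    exact this
  -- zOrder is finitely generated as an additive group
  have hzfg : ∀ m : ℕ, (zOrder α m).toAddSubgroup.FG := by
    intro m
    have hint : IsIntegral ℤ ((m : ℂ) * α) := by
      have hm : IsIntegral ℤ ((m : ℂ)) := by
        have : ((m : ℂ)) = algebraMap ℤ ℂ (m : ℤ) := by push_cast; ring
        rw [this]; exact isIntegral_algebraMap
      exact hm.mul hαint
    have hadj : (Algebra.adjoin ℤ ({(m : ℂ) * α} : Set ℂ)).toSubmodule.FG :=
      hint.fg_adjoin_singleton
    have heq : AddSubgroup.toIntSubmodule (zOrder α m).toAddSubgroup =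
        (Algebra.adjoin ℤ ({(m : ℂ) * α} : Set ℂ)).toSubmodule := by
      ext x
      rw [Algebra.adjoin_int]
      rfl
    rw [addSubgroup_fg_iff, heq]
    exact hadj
  -- absorption lemmas for orders
  have hOO : ∀ m : ℕ, latticeProduct (zOrder α m).toAddSubgroup (zOrder α m).toAddSubgroup
      = (zOrder α m).toAddSubgroup :=
    fun m => latticeProduct_absorb _ _ fun r hr x hx => Subring.mul_mem _ hr hx
  have hbig : ∀ m n : ℕ, m ∣ n →
      latticeProduct (zOrder α m).toAddSubgroup (zOrder α n).toAddSubgroup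
        = (zOrder α m).toAddSubgroup := by
    intro m n hmn
    rw [latticeProduct_comm]
    exact latticeProduct_absorb _ _ fun r hr x hx =>
      Subring.mul_mem _ (hmono m n hmn hr) hx
  -- a generic push-forward for fractional ideals
  have hfracpush : ∀ m : ℕ, ∀ Λ : AddSubgroup ℂ, IsFracIdeal K (zOrder α a) Λ →
      IsFracIdeal K (zOrder α m) (latticeProduct (zOrder α m).toAddSubgroup Λ) := by
    intro m Λ ⟨hΛK, hΛbot, hΛfg, hΛmod⟩
    refine ⟨?_, ?_, ?_, ?_⟩
    · have hle : latticeProduct (zOrder α m).toAddSubgroup Λ ≤ K.toSubring.toAddSubgroup := by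
        refine AddSubgroup.closure_le _ |>.2 ?_
        rintro z ⟨p, hp, q, hq, rfl⟩
        exact K.toSubring.mul_mem (hzK m hp) (hΛK hq)
      exact hle
    · intro hbot
      exact hΛbot (le_bot_iff.1 (hbot ▸ le_latticeProduct_right (zOrder α m) Λ))
    · exact latticeProduct_fg (hzfg m) hΛfg
    · intro r hr x hx
      have : r * x ∈ latticeProduct (zOrder α m).toAddSubgroup
          (latticeProduct (zOrder α m).toAddSubgroup Λ) :=
        mul_mem_latticeProduct hr hx
      rwa [← latticeProduct_assoc, hOO m] at this
  refine ⟨?_, ?_, ?_, ?_, ?_⟩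
  -- Part 1
  · rintro Λ ⟨hΛ, M, hM, hΛM⟩
    refine ⟨hfracpush c Λ hΛ, latticeProduct (zOrder α c).toAddSubgroup M,
      hfracpush c M hM, ?_⟩
    apply toIntSubmodule_inj
    have hlm := congrArg AddSubgroup.toIntSubmodule hΛM
    rw [toIntSubmodule_latticeProduct] at hlm
    have hcc := congrArg AddSubgroup.toIntSubmodule (hOO c)
    rw [toIntSubmodule_latticeProduct] at hcc
    have hco := congrArg AddSubgroup.toIntSubmodule (hbig c a hca)
    rw [toIntSubmodule_latticeProduct] at hco
    rw [toIntSubmodule_latticeProduct, toIntSubmodule_latticeProduct,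
      toIntSubmodule_latticeProduct, mul_mul_mul_comm, hcc, hlm, hco]
  -- Part 2
  · rintro Λ₁ Λ₂ _ _ ⟨γ, hγ, hset⟩
    have hmap : Λ₂ = Λ₁.map (AddMonoidHom.mulLeft γ) := by
      apply SetLike.ext'
      rw [hset]
      ext x
      simp only [AddSubgroup.coe_map, Set.mem_image, Set.mem_smul_set, smul_eq_mul,
        AddMonoidHom.coe_mulLeft]
    refine ⟨γ, hγ, ?_⟩
    rw [hmap, latticeProduct_map]
    ext x
    simp only [AddSubgroup.coe_map, Set.mem_image, Set.mem_smul_set, smul_eq_mul,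
      AddMonoidHom.coe_mulLeft, SetLike.mem_coe]
  -- Part 3
  · rintro Λ₁ Λ₂ _ _
    have hcc := congrArg AddSubgroup.toIntSubmodule (hOO c)
    rw [toIntSubmodule_latticeProduct] at hcc
    have heq : latticeProduct (latticeProduct (zOrder α c).toAddSubgroup Λ₁)
        (latticeProduct (zOrder α c).toAddSubgroup Λ₂) =
        latticeProduct (zOrder α c).toAddSubgroup (latticeProduct Λ₁ Λ₂) := by
      apply toIntSubmodule_inj
      simp only [toIntSubmodule_latticeProduct]
      rw [mul_mul_mul_comm, hcc]
    exact ⟨1, one_ne_zero, by rw [heq, one_smul]⟩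
  -- Part 4
  · rintro Λ _
    rw [← latticeProduct_assoc, hbig d c hdc]
  -- Part 5
  · rintro Λ ⟨⟨_, _, _, hmod⟩, _⟩
    exact latticeProduct_absorb _ _ hmod
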